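/- arXiv:2312.11341 — 8 statements merged into one kernel-verified Lean document; each statement's English description precedes it below -/
import Mathlib

section
/- Let F be a field of odd characteristic, L/F a field extension of degree m, n = 2d an even integer with m ≥ n. Let h_{n,L} be the standard hyperbolic bilinear form on Lⁿ given by h(x,y) = Σ_{k=1}^{d} (x_k y_{k+d} + x_{k+d} y_k). If C ⊆ Lⁿ is an L-subspace satisfying C = C^⊥ with respect to h_{n,L} (a Lagrangian code), then the minimum rank distance of C satisfies d₁(C) ≤ d. In particular, C is not MRD. -/
/-!
A Lagrangian subspace `C` of `L^{2d}` has dimension `d`, so imposing the `d - 1` linear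
conditions `c (inl k) = 0` for `k ≠ i₀` leaves a nonzero codeword `c`. Then
`h(c, c) = 2 c(inl i₀) c(inr i₀) = 0`, and since `2 ≠ 0` one of these two entries vanishes.
All entries of `c` therefore lie in `{0}` together with the `d` values `c(inl i₀) + c(inr i₀)`
and `c(inr k)`, `k ≠ i₀`, which span an `F`-space of dimension at most `d`.
-/

open Module Submodule LinearMap
open LinearMap (BilinForm)

namespace LinearMap.BilinForm

variable {K V : Type*} [Field K] [AddCommGroup V] [Module K V] [FiniteDimensional K V]

theorem two_mul_finrank_eq_of_orthogonal_eq_self {B : BilinForm K V}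
    (hB : B.Nondegenerate) {C : Submodule K V} (hC : B.orthogonal C = C) :
    2 * finrank K C = finrank K V := by
  have := finrank_orthogonal hB C
  rw [hC] at this
  have := C.finrank_le
  omega

end LinearMap.BilinForm

section Hyperbolic

variable (L ι : Type*) [Field L] [Fintype ι]

noncomputable def hyperbolicForm : BilinForm L (ι ⊕ ι → L) :=
  let π (i : ι ⊕ ι) : (ι ⊕ ι → L) →ₗ[L] L := proj i
  ∑ k : ι, ((mul L L).compl₁₂ (π (.inl k)) (π (.inr k)) +
    (mul L L).compl₁₂ (π (.inr k)) (π (.inl k)))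

variable {L ι}

theorem hyperbolicForm_apply (x y : ι ⊕ ι → L) :
    hyperbolicForm L ι x y =
      ∑ k : ι, (x (Sum.inl k) * y (Sum.inr k) + x (Sum.inr k) * y (Sum.inl k)) := by
  simp [hyperbolicForm, LinearMap.sum_apply]

theorem hyperbolicForm_comm (x y : ι ⊕ ι → L) :
    hyperbolicForm L ι x y = hyperbolicForm L ι y x := by
  simp only [hyperbolicForm_apply, mul_comm, add_comm]

theorem hyperbolicForm_nondegenerate [DecidableEq ι] : (hyperbolicForm L ι).Nondegenerate := by
  refine .ofSeparatingLeft fun x hx => funext fun i => ?_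
  cases i with
  | inl j => simpa [hyperbolicForm_apply, Pi.single_apply] using hx (Pi.single (Sum.inr j) 1)
  | inr j => simpa [hyperbolicForm_apply, Pi.single_apply] using hx (Pi.single (Sum.inl j) 1)

end Hyperbolic

theorem finrank_span_range_le_card_of_range_subset {K M ι κ : Type*} [DivisionRing K]
    [AddCommGroup M] [Module K M] [Fintype κ] {c : ι → M} (g : κ → M)
    (h : Set.range c ⊆ insert 0 (Set.range g)) :
    finrank K (span K (Set.range c)) ≤ Fintype.card κ := by
  have hle : span K (Set.range c) ≤ span K (Set.range g) := by
    simpa only [span_insert_zero] using span_mono (R := K) h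
  have := FiniteDimensional.span_of_finite K (Set.finite_range g)
  exact (finrank_mono hle).trans (finrank_range_le_card g)

theorem exists_ne_zero_finrank_span_le_of_orthogonal_hyperbolicForm_eq_self (K : Type*)
    {L ι : Type*} [DivisionRing K] [Field L] [Module K L] [Fintype ι] [DecidableEq ι]
    (i₀ : ι) (h2 : (2 : L) ≠ 0) {C : Submodule L (ι ⊕ ι → L)}
    (hC : (hyperbolicForm L ι).orthogonal C = C) :
    ∃ c ∈ C, c ≠ 0 ∧ finrank K (span K (Set.range c)) ≤ Fintype.card ι := by
  have hdim : finrank L C = Fintype.card ι := by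
    have := BilinForm.two_mul_finrank_eq_of_orthogonal_eq_self hyperbolicForm_nondegenerate hC
    rw [finrank_fintype_fun_eq_card, Fintype.card_sum] at this
    omega
  let f : C →ₗ[L] ({k // k ≠ i₀} → L) :=
    (funLeft L L fun k : {k // k ≠ i₀} => Sum.inl k.1).domRestrict C
  have hker : ker f ≠ ⊥ := ker_ne_bot_of_finrank_lt <| by
    simp only [finrank_fintype_fun_eq_card, Fintype.card_subtype_compl, Fintype.card_unique, hdim]
    have : 0 < Fintype.card ι := Fintype.card_pos_iff.2 ⟨i₀⟩
    omega
  obtain ⟨⟨c, hcC⟩, hc_ker, hc0⟩ := Submodule.ne_bot_iff _ |>.1 hker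
  have hc_inl (k : ι) (hk : k ≠ i₀) : c (.inl k) = 0 := congr_fun hc_ker ⟨k, hk⟩
  have hself : c (.inl i₀) * c (.inr i₀) = 0 := by
    have := (show c ∈ (hyperbolicForm L ι).orthogonal C by rwa [hC]) c hcC
    rw [hyperbolicForm_apply, Finset.sum_eq_single i₀ (fun k _ hk => by simp [hc_inl k hk])
      (by simp)] at this
    exact (mul_eq_zero.1 (by linear_combination this : 2 * (c (.inl i₀) * c (.inr i₀)) = 0))
      |>.resolve_left h2
  refine ⟨c, hcC, fun h => hc0 (Subtype.ext h), ?_⟩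
  refine finrank_span_range_le_card_of_range_subset
    (Function.update (c ∘ .inr) i₀ (c (.inl i₀) + c (.inr i₀))) ?_
  rintro _ ⟨k | k, rfl⟩ <;> by_cases hk : k = i₀
  · subst hk
    rcases mul_eq_zero.1 hself with h | h
    · exact .inl h
    · exact .inr ⟨k, by simp [h]⟩
  · exact .inl (hc_inl k hk)
  · subst hk
    rcases mul_eq_zero.1 hself with h | h
    · exact .inr ⟨k, by simp [h]⟩
    · exact .inl h
  · exact .inr ⟨k, by simp [hk]⟩

theorem stmt_3_general (F L : Type*) [Field F] [Field L] [Algebra F L]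
    (p : ℕ) [CharP F p] (hp : Odd p)
    (d : ℕ) (hd : 0 < d)
    (C : Submodule L (Fin d ⊕ Fin d → L))
    (hC : ∀ x, x ∈ C ↔ ∀ y ∈ C,
      ∑ k : Fin d, (x (Sum.inl k) * y (Sum.inr k) + x (Sum.inr k) * y (Sum.inl k)) = 0) :
    ∃ c ∈ C, c ≠ 0 ∧ Module.finrank F (Submodule.span F (Set.range c)) ≤ d := by
  have h2 : (2 : L) ≠ 0 := Ring.two_ne_zero <| by
    rw [← Algebra.ringChar_eq F L, ringChar.eq F p]
    rintro rfl
    exact Nat.not_odd_iff_even.2 even_two hp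
  have hC' : (hyperbolicForm L (Fin d)).orthogonal C = C := by
    ext x
    rw [BilinForm.mem_orthogonal_iff, hC x]
    exact forall₂_congr fun y _ => by rw [hyperbolicForm_comm, hyperbolicForm_apply]
  simpa using
    exists_ne_zero_finrank_span_le_of_orthogonal_hyperbolicForm_eq_self F ⟨0, hd⟩ h2 hC'

/-- Over a field of odd characteristic, a Lagrangian code (self-dual for the standard
hyperbolic form on `L^{2d}`) has minimum rank distance at most `d`; in particular it is
not MRD. -/
theorem stmt_3 (F L : Type*) [Field F] [Field L] [Algebra F L] [FiniteDimensional F L]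
    (p : ℕ) [Fact p.Prime] [CharP F p] (hp : Odd p)
    (d : ℕ) (hd : 0 < d) (hm : 2 * d ≤ Module.finrank F L)
    (C : Submodule L (Fin d ⊕ Fin d → L))
    (hC : ∀ x, x ∈ C ↔ ∀ y ∈ C,
      ∑ k : Fin d, (x (Sum.inl k) * y (Sum.inr k) + x (Sum.inr k) * y (Sum.inl k)) = 0) :
    ∃ c ∈ C, c ≠ 0 ∧ Module.finrank F (Submodule.span F (Set.range c)) ≤ d :=
  stmt_3_general F L p hp d hd C hC
end

section
/- Let F be a field of characteristic two, L/F a field extension of finite degree, and C ⊆ Lⁿ an L-linear code with C ⊆ C^⊥, where the orthogonal is taken with respect to the standard inner product (x,y) ↦ Σ xᵢyᵢ on Lⁿ. Then the all-ones vector (1,1,...,1) lies in C^⊥, and consequently d₁(C^⊥) ≤ 1. In particular, there are no self-dual MRD codes in Lⁿ when char F = 2. -/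
/-!
In characteristic two squaring is additive, so for every codeword `y` of a self-orthogonal code
`(∑ yᵢ)² = ∑ yᵢ² = ⟨y, y⟩ = 0`, i.e. `y` is orthogonal to the all-ones vector. The all-ones vector
has rank weight one, so `d₁(C^⊥) ≤ 1`. If `C` is self-dual it contains the all-ones vector, and the
MRD bound `n/2 + 1 ≤ 1` forces `n = 1`, where the all-ones vector is not self-orthogonal.
-/

open Module Submodule

theorem CharTwo.sum_eq_zero_of_sum_mul_self_eq_zero {R ι : Type*} [CommRing R] [IsReduced R]
    [CharP R 2] (s : Finset ι) (y : ι → R) (h : ∑ i ∈ s, y i * y i = 0) : ∑ i ∈ s, y i = 0 := by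
  have hsq : (∑ i ∈ s, y i) ^ 2 = 0 := by
    rw [sum_pow_char]
    simpa only [sq] using h
  exact IsNilpotent.eq_zero ⟨2, hsq⟩

theorem finrank_span_range_const_le_one {K V ι : Type*} [DivisionRing K] [AddCommGroup V]
    [Module K V] [Nonempty ι] (v : V) : finrank K (span K (Set.range fun _ : ι => v)) ≤ 1 := by
  rw [Set.range_const]
  simpa using finrank_span_le_card (R := K) ({v} : Set V)

theorem stmt_6_general (F L : Type*) [Field F] [Field L] [Algebra F L]
    [CharP F 2] (n : ℕ) (hn : 0 < n) (C : Submodule L (Fin n → L))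
    (hC : ∀ x ∈ C, ∀ y ∈ C, ∑ i, x i * y i = 0) :
    (∀ y ∈ C, ∑ i, (1 : L) * y i = 0) ∧
    (∃ c : Fin n → L, (∀ y ∈ C, ∑ i, c i * y i = 0) ∧ c ≠ 0 ∧
      Module.finrank F (Submodule.span F (Set.range c)) ≤ 1) ∧
    ((∀ x, x ∈ C ↔ ∀ y ∈ C, ∑ i, x i * y i = 0) →
      ¬ (∀ c ∈ C, c ≠ 0 →
        n / 2 + 1 ≤ Module.finrank F (Submodule.span F (Set.range c)))) := by
  have : CharP L 2 := charP_of_injective_algebraMap (algebraMap F L).injective 2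
  have : NeZero n := ⟨hn.ne'⟩
  have hone_perp : ∀ y ∈ C, ∑ i, (1 : L) * y i = 0 := fun y hy => by
    simpa only [one_mul] using CharTwo.sum_eq_zero_of_sum_mul_self_eq_zero _ y (hC y hy y hy)
  have hone_rank : finrank F (span F (Set.range (1 : Fin n → L))) ≤ 1 :=
    finrank_span_range_const_le_one (1 : L)
  refine ⟨hone_perp, ⟨1, hone_perp, one_ne_zero, hone_rank⟩, fun hdual hMRD => ?_⟩
  have hone_mem : (1 : Fin n → L) ∈ C := (hdual 1).mpr hone_perp
  have hn_one : n = 1 := by have := hMRD 1 hone_mem one_ne_zero; omega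
  subst hn_one
  simpa using hC 1 hone_mem 1 hone_mem

/-- In characteristic two, if `C ⊆ C^⊥` then the all-ones vector lies in `C^⊥`, hence
`d₁(C^⊥) ≤ 1`; in particular there are no self-dual MRD codes. -/
theorem stmt_6 (F L : Type*) [Field F] [Field L] [Algebra F L] [FiniteDimensional F L]
    [CharP F 2] (n : ℕ) (hn : 0 < n) (C : Submodule L (Fin n → L))
    (hC : ∀ x ∈ C, ∀ y ∈ C, ∑ i, x i * y i = 0) :
    (∀ y ∈ C, ∑ i, (1 : L) * y i = 0) ∧
    (∃ c : Fin n → L, (∀ y ∈ C, ∑ i, c i * y i = 0) ∧ c ≠ 0 ∧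
      Module.finrank F (Submodule.span F (Set.range c)) ≤ 1) ∧
    ((∀ x, x ∈ C ↔ ∀ y ∈ C, ∑ i, x i * y i = 0) →
      ¬ (∀ c ∈ C, c ≠ 0 →
        n / 2 + 1 ≤ Module.finrank F (Submodule.span F (Set.range c)))) :=
  stmt_6_general F L n hn C hC
end

section
/- Let F be a field of odd characteristic, L/F a field extension of degree m, and n = 2^{s+1} r an even integer with r odd and m ≥ n. If there exists a self-dual L-linear code C ⊆ Lⁿ (with respect to the standard inner product), then −1 is a sum of 2^s squares in L. -/
/-!
For `s ≥ 1` the claim holds in every field of odd characteristic: `-1` is already a sum of two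
squares in the prime field. For `s = 0` we have `n = 2r`, and a self-dual code `C` is a Lagrangian
subspace of dimension `r` for the dot product. In a basis adapted to `C ⊕ D`, `D` a complement,
the Gram matrix has a zero upper-left block, so its determinant is `(-1)^r det(X)^2`; in the
standard basis it is `1`. Gram determinants in two bases differ by a square, so `(-1)^r = -1` is
a square.
-/

open Matrix Module

namespace Matrix

variable {m R : Type*} [Fintype m] [DecidableEq m] [CommRing R]

theorem det_fromBlocks_zero_one_one_zero :
    (fromBlocks 0 1 1 0 : Matrix (m ⊕ m) (m ⊕ m) R).det = (-1) ^ Fintype.card m := by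
  have : (fromBlocks 0 1 1 0 : Matrix (m ⊕ m) (m ⊕ m) R) = fromBlocks 1 1 0 1 *
      fromBlocks 1 0 (-1) 1 * fromBlocks 1 1 0 1 * fromBlocks (-1) 0 0 1 := by
    simp [fromBlocks_multiply]
  rw [this]
  simp [det_neg]

theorem det_fromBlocks_zero₁₁ (B C D : Matrix m m R) :
    (fromBlocks 0 B C D).det = (-1) ^ Fintype.card m * (B.det * C.det) := by
  rw [show fromBlocks 0 B C D = fromBlocks 0 1 1 0 * fromBlocks C D 0 B by
      simp [fromBlocks_multiply],
    det_mul, det_fromBlocks_zero_one_one_zero, det_fromBlocks_zero₂₁, mul_comm C.det]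

theorem IsSymm.det_eq_of_toBlocks₁₁_eq_zero {G : Matrix (m ⊕ m) (m ⊕ m) R}
    (hG : G.IsSymm) (h₁₁ : G.toBlocks₁₁ = 0) : G.det = (-1) ^ Fintype.card m * G.toBlocks₁₂.det ^ 2 := by
  have h₂₁ : G.toBlocks₂₁ = G.toBlocks₁₂ᵀ := by
    ext i j
    exact hG.apply (Sum.inl j) (Sum.inr i)
  conv_lhs => rw [← fromBlocks_toBlocks G, h₁₁, h₂₁]
  rw [det_fromBlocks_zero₁₁, det_transpose, sq]

end Matrix

namespace LinearMap.BilinForm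

variable {K V : Type*} [Field K] [AddCommGroup V] [Module K V] [FiniteDimensional K V]
  {B : LinearMap.BilinForm K V} {W : Submodule K V}

theorem exists_basis_toBlocks₁₁_toMatrix_eq_zero (hW : W ≤ B.orthogonal W) {k : ℕ}
    (hk : finrank K W = k) (hV : finrank K V = k + k) :
    ∃ b : Basis (Fin k ⊕ Fin k) K V, (toMatrix b B).toBlocks₁₁ = 0 := by
  obtain ⟨D, hD⟩ := Submodule.exists_isCompl W
  have hDk : finrank K D = k := by
    have := Submodule.finrank_add_eq_of_isCompl hD
    omega
  refine ⟨((finBasisOfFinrankEq K W hk).prod (finBasisOfFinrankEq K D hDk)).map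
    (Submodule.prodEquivOfIsCompl W D hD), ?_⟩
  ext i j
  simpa [toBlocks₁₁, Submodule.coe_prodEquivOfIsCompl'] using
    hW (finBasisOfFinrankEq K W hk j).2 _ (finBasisOfFinrankEq K W hk i).2

theorem isSquare_neg_one_pow_mul_det_toMatrix (hB : B.IsSymm) (hW : W ≤ B.orthogonal W)
    {k : ℕ} (hk : finrank K W = k) (c : Basis (Fin k ⊕ Fin k) K V) :
    IsSquare ((-1) ^ k * (toMatrix c B).det) := by
  have hV : finrank K V = k + k := by simp [finrank_eq_card_basis c]
  obtain ⟨b, hb⟩ := exists_basis_toBlocks₁₁_toMatrix_eq_zero hW hk hV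
  have hdet_b := (isSymm_toMatrix_iff_isSymm b).mpr hB |>.det_eq_of_toBlocks₁₁_eq_zero hb
  rw [Fintype.card_fin] at hdet_b
  have hdet_c := congrArg det (toMatrix_mul_basis_toMatrix b c B)
  rw [det_mul, det_mul, det_transpose, hdet_b] at hdet_c
  have hsign : ((-1 : K) ^ k) ^ 2 = 1 := by rw [← pow_mul', (even_two_mul k).neg_one_pow]
  refine ⟨(b.toMatrix c).det * (toMatrix b B).toBlocks₁₂.det, ?_⟩
  rw [← hdet_c]
  linear_combination ((b.toMatrix c).det * (toMatrix b B).toBlocks₁₂.det) ^ 2 * hsign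

section DotProduct

variable {ι : Type*} [Fintype ι] [DecidableEq ι]

local notation "β" => (dotProductBilin K K : LinearMap.BilinForm K (ι → K))

theorem toMatrix_reindex_piBasisFun_dotProductBilin {κ : Type*} [Fintype κ] [DecidableEq κ]
    (e : ι ≃ κ) : toMatrix ((Pi.basisFun K ι).reindex e) β = 1 := by
  ext i j
  simp [Matrix.one_apply, Pi.single_apply, e.symm_apply_eq, eq_comm]

theorem isSymm_dotProductBilin : IsSymm β := by
  rw [← isSymm_toMatrix_iff_isSymm ((Pi.basisFun K ι).reindex (Equiv.refl ι)),
    toMatrix_reindex_piBasisFun_dotProductBilin]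
  exact Matrix.isSymm_one

theorem nondegenerate_dotProductBilin : Nondegenerate β := by
  rw [nondegenerate_iff_det_ne_zero ((Pi.basisFun K ι).reindex (Equiv.refl ι)),
    toMatrix_reindex_piBasisFun_dotProductBilin, Matrix.det_one]
  exact one_ne_zero

variable {C : Submodule K (ι → K)}

theorem finrank_add_finrank_of_orthogonal_dotProductBilin_eq_self
    (hC : orthogonal β C = C) : finrank K C + finrank K C = Fintype.card ι := by
  have := finrank_orthogonal nondegenerate_dotProductBilin C
  rw [hC, finrank_fintype_fun_eq_card] at this
  have := Submodule.finrank_le C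
  rw [finrank_fintype_fun_eq_card] at this
  omega

theorem isSquare_neg_one_pow_finrank_of_orthogonal_dotProductBilin_eq_self
    (hC : orthogonal β C = C) : IsSquare ((-1 : K) ^ finrank K C) := by
  let e : ι ≃ Fin (finrank K C) ⊕ Fin (finrank K C) := Fintype.equivOfCardEq <| by
    simp [finrank_add_finrank_of_orthogonal_dotProductBilin_eq_self hC]
  simpa [toMatrix_reindex_piBasisFun_dotProductBilin] using
    isSquare_neg_one_pow_mul_det_toMatrix isSymm_dotProductBilin hC.ge rfl
      ((Pi.basisFun K ι).reindex e)

end DotProduct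

end LinearMap.BilinForm

theorem exists_sum_sq_fin_eq_of_le {R : Type*} [Semiring R] {k m : ℕ} (h : k ≤ m)
    (f : Fin k → R) : ∃ g : Fin m → R, ∑ i, g i ^ 2 = ∑ i, f i ^ 2 := by
  obtain ⟨d, rfl⟩ := Nat.exists_eq_add_of_le h
  exact ⟨Fin.append f 0, by simp [Fin.sum_univ_add]⟩

theorem exists_sum_two_sq_eq_neg_one_of_charP (L : Type*) [Field L] (p : ℕ) [NeZero p]
    [CharP L p] : ∃ f : Fin 2 → L, ∑ i, f i ^ 2 = -1 := by
  obtain ⟨a, b, hab⟩ := CharP.sq_add_sq L p (-1)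
  exact ⟨![a, b], by simpa using hab⟩

theorem stmt_9_general (F L : Type*) [Field F] [Field L] [Algebra F L]
    (p : ℕ) [CharP F p] (hp : Odd p)
    (s r : ℕ) (hr : Odd r) (n : ℕ) (hn : n = 2 ^ (s + 1) * r)
    (C : Submodule L (Fin n → L))
    (hC : ∀ x, x ∈ C ↔ ∀ y ∈ C, ∑ i, x i * y i = 0) :
    ∃ f : Fin (2 ^ s) → L, ∑ i, f i ^ 2 = -1 := by
  cases s with
  | zero =>
    have hdual : LinearMap.BilinForm.orthogonal (dotProductBilin L L) C = C := by
      ext x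
      simp only [LinearMap.BilinForm.mem_orthogonal_iff, hC x, dotProductBilin_apply_apply,
        dotProduct_comm _ x]
      rfl
    have hdim :=
      LinearMap.BilinForm.finrank_add_finrank_of_orthogonal_dotProductBilin_eq_self hdual
    have hrank : finrank L C = r := by
      rw [Fintype.card_fin] at hdim
      rw [zero_add, pow_one] at hn
      omega
    obtain ⟨c, hc⟩ :=
      LinearMap.BilinForm.isSquare_neg_one_pow_finrank_of_orthogonal_dotProductBilin_eq_self hdual
    rw [hrank, hr.neg_one_pow] at hc
    exact ⟨fun _ => c, by simp [hc, sq]⟩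
  | succ t =>
    have : CharP L p := charP_of_injective_algebraMap (algebraMap F L).injective p
    have : NeZero p := ⟨hp.pos.ne'⟩
    obtain ⟨f, hf⟩ := exists_sum_two_sq_eq_neg_one_of_charP L p
    obtain ⟨g, hg⟩ := exists_sum_sq_fin_eq_of_le (Nat.le_self_pow t.succ_ne_zero 2) f
    exact ⟨g, hg.trans hf⟩

/-- If there exists a self-dual code `C ⊆ Lⁿ` with `n = 2^{s+1} r`, `r` odd, over a
field of odd characteristic, then `-1` is a sum of `2^s` squares in `L`. -/
theorem stmt_9 (F L : Type*) [Field F] [Field L] [Algebra F L] [FiniteDimensional F L]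
    (p : ℕ) [Fact p.Prime] [CharP F p] (hp : Odd p)
    (s r : ℕ) (hr : Odd r) (n : ℕ) (hn : n = 2 ^ (s + 1) * r)
    (hm : n ≤ Module.finrank F L)
    (C : Submodule L (Fin n → L))
    (hC : ∀ x, x ∈ C ↔ ∀ y ∈ C, ∑ i, x i * y i = 0) :
    ∃ f : Fin (2 ^ s) → L, ∑ i, f i ^ 2 = -1 :=
  stmt_9_general F L p hp s r hr n hn C hC
end

section
/- Let F be a field of odd characteristic, n = 2d with d odd, and L/F a field extension of degree m ≥ n. If there exists a self-dual L-linear code C ⊆ Lⁿ, then −1 is a square in L. Conversely, if −1 is a square in F, then there is no self-dual MRD code in Lⁿ. -/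
/-!
A self-dual code `C ⊆ Lⁿ` has dimension `n / 2`. Choosing `n / 2` coordinates on which `C`
projects isomorphically writes a generator matrix as `[A | B]` with `A` invertible and
`A Aᵀ + B Bᵀ = 0`; taking determinants, `(-1) ^ (n / 2)` is a square.

If `η ∈ F` satisfies `η² = -1`, the foldings `φ, ψ : x ↦ x₁ ± η x₂` of the two halves of the
coordinates are injective on an MRD code, because a codeword they kill has all its entries in the
`F`-span of its second half, hence rank at most `n / 2`. On a basis `w` of a self-dual `C` the
matrix `(φ wᵢ ⬝ ψ wⱼ)` is therefore invertible, yet it is skew-symmetric since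
`φ x ⬝ ψ y + φ y ⬝ ψ x = 2 (x ⬝ y)`; in odd size and characteristic `≠ 2` this is impossible.
-/

open Module Matrix

theorem Matrix.exists_injective_isUnit_submatrix {m n K : Type*} [Fintype m] [DecidableEq m]
    [Fintype n] [Field K] {M : Matrix m n K} (hM : LinearIndependent K M.row) :
    ∃ e : m → n, Function.Injective e ∧ IsUnit (M.submatrix id e) := by
  obtain ⟨κ, a, ha, hspan, hli⟩ := exists_linearIndependent' K M.col
  have : Fintype κ := @Fintype.ofFinite κ (Finite.of_injective a ha)
  have hcard : Fintype.card κ = Fintype.card m := by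
    rw [← finrank_span_eq_card hli, hspan, ← rank_eq_finrank_span_cols, hM.rank_matrix]
  obtain ⟨σ⟩ : Nonempty (m ≃ κ) := Fintype.card_eq.mp hcard.symm
  refine ⟨a ∘ σ, ha.comp σ.injective, ?_⟩
  rw [← linearIndependent_cols_iff_isUnit]
  exact hli.comp σ σ.injective

theorem Function.Injective.exists_sumEquiv {α β γ : Type*} [Fintype α] [Fintype β] [Fintype γ]
    {e : α → β} (he : Function.Injective e)
    (hcard : Fintype.card α + Fintype.card γ = Fintype.card β) :
    ∃ E : α ⊕ γ ≃ β, ∀ a, E (.inl a) = e a := by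
  classical
  obtain ⟨σ⟩ : Nonempty (γ ≃ ↥(Set.range e)ᶜ) := by
    rw [← Fintype.card_eq, Fintype.card_compl_set, Set.card_range_of_injective he]
    omega
  exact ⟨(Equiv.sumCongr (Equiv.ofInjective e he) σ).trans (Equiv.Set.sumCompl _), fun _ => rfl⟩

theorem Matrix.isSquare_neg_one_pow_card_of_mul_transpose_add_eq_zero {n K : Type*} [Fintype n]
    [DecidableEq n] [Field K] {A B : Matrix n n K} (hA : IsUnit A) (hAB : A * Aᵀ + B * Bᵀ = 0) :
    IsSquare ((-1 : K) ^ Fintype.card n) := by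
  have hdet : A.det * A.det = (-1) ^ Fintype.card n * (B.det * B.det) := by
    simpa [det_mul, det_neg] using congrArg det (eq_neg_of_add_eq_zero_left hAB)
  have hA0 : A.det ≠ 0 := ((isUnit_iff_isUnit_det A).mp hA).ne_zero
  have hB0 : B.det ≠ 0 := by
    rintro hB
    simp only [hB, mul_zero, mul_self_eq_zero] at hdet
    exact hA0 hdet
  refine ⟨A.det / B.det, ?_⟩
  rw [div_mul_div_comm, hdet, mul_div_assoc, div_self (mul_ne_zero hB0 hB0), mul_one]

theorem Matrix.det_eq_zero_of_transpose_eq_neg {n R : Type*} [Fintype n] [DecidableEq n]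
    [CommRing R] [NoZeroDivisors R] (h2 : (2 : R) ≠ 0) {M : Matrix n n R}
    (hn : Odd (Fintype.card n)) (hM : Mᵀ = -M) : M.det = 0 := by
  have h : M.det = -M.det := by simpa [det_neg, hn.neg_one_pow] using congrArg det hM
  have h' : 2 * M.det = 0 := by linear_combination h
  exact (mul_eq_zero.mp h').resolve_left h2

section SelfDual

variable {L ι : Type*} [Field L] [Fintype ι]

def Submodule.IsSelfDual (C : Submodule L (ι → L)) : Prop :=
  ∀ x, x ∈ C ↔ ∀ y ∈ C, x ⬝ᵥ y = 0

theorem Submodule.IsSelfDual.two_mul_finrank {C : Submodule L (ι → L)} (hC : C.IsSelfDual) :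
    2 * finrank L C = Fintype.card ι := by
  let B : LinearMap.BilinForm L (ι → L) := dotProductBilin L L
  have hB : B.Nondegenerate :=
    ⟨fun x hx => dotProduct_eq_zero x hx,
      fun y hy => dotProduct_eq_zero y fun x => (dotProduct_comm y x).trans (hy x)⟩
  have horth : B.orthogonal C = C := by
    ext x
    rw [LinearMap.BilinForm.mem_orthogonal_iff, hC x]
    refine forall₂_congr fun y _ => ?_
    change y ⬝ᵥ x = 0 ↔ _
    rw [dotProduct_comm]
  have hdim := LinearMap.BilinForm.finrank_orthogonal hB C
  have hle := Submodule.finrank_le C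
  rw [horth, finrank_fintype_fun_eq_card] at hdim
  rw [finrank_fintype_fun_eq_card] at hle
  omega

theorem Submodule.IsSelfDual.isSquare_neg_one_pow_finrank {C : Submodule L (ι → L)}
    (hC : C.IsSelfDual) : IsSquare ((-1 : L) ^ finrank L C) := by
  set d := finrank L C
  let w := Module.finBasis L C
  let G : Matrix (Fin d) ι L := Matrix.of fun i => (w i : ι → L)
  have hG : LinearIndependent L G.row := w.linearIndependent.map' C.subtype C.ker_subtype
  have hGG : G * Gᵀ = 0 := by
    ext i j
    exact (hC _).1 (w i).2 _ (w j).2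
  obtain ⟨e, he, hA⟩ := G.exists_injective_isUnit_submatrix hG
  obtain ⟨E, hE⟩ := he.exists_sumEquiv (γ := Fin d) (by
    rw [Fintype.card_fin, ← hC.two_mul_finrank]
    ring)
  have hsplit : G.submatrix id E = fromCols (G.submatrix id e) (G.submatrix id (E ∘ .inr)) := by
    ext i (j | j) <;> simp [hE]
  refine Fintype.card_fin d ▸ isSquare_neg_one_pow_card_of_mul_transpose_add_eq_zero
    (B := G.submatrix id (E ∘ .inr)) hA ?_
  calc _ = G.submatrix id E * (G.submatrix id E)ᵀ := by
        rw [hsplit, transpose_fromCols, fromCols_mul_fromRows]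
    _ = 0 := by rw [transpose_submatrix, submatrix_mul_equiv, hGG, submatrix_id_id]

end SelfDual

section SumFold

variable {L ι κ : Type*} [Field L] (e : κ ⊕ κ ≃ ι)

def sumFold (η : L) : (ι → L) →ₗ[L] κ → L :=
  LinearMap.funLeft L L (e ∘ .inl) + η • LinearMap.funLeft L L (e ∘ .inr)

variable {e}

@[simp] theorem sumFold_apply (η : L) (x : ι → L) (j : κ) :
    sumFold e η x j = x (e (.inl j)) + η * x (e (.inr j)) := rfl

variable [Fintype κ]

theorem sumFold_dotProduct_add [Fintype ι] {η : L} (hη : η * η = -1) (x y : ι → L) :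
    sumFold e η x ⬝ᵥ sumFold e (-η) y + sumFold e η y ⬝ᵥ sumFold e (-η) x = 2 * (x ⬝ᵥ y) := by
  simp only [dotProduct, ← e.sum_comp (fun i => x i * y i), Fintype.sum_sum_type, sumFold_apply,
    ← Finset.sum_add_distrib, Finset.mul_sum]
  exact Finset.sum_congr rfl fun j _ => by
    linear_combination (-2 * x (e (.inr j)) * y (e (.inr j))) * hη

theorem finrank_span_range_le_of_sumFold_eq_zero {F : Type*} [Field F] [Algebra F L] (ε : F)
    {x : ι → L} (hx : sumFold e (algebraMap F L ε) x = 0) :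
    finrank F (Submodule.span F (Set.range x)) ≤ Fintype.card κ := by
  have hle : Submodule.span F (Set.range x) ≤ Submodule.span F (Set.range (x ∘ e ∘ .inr)) := by
    rw [Submodule.span_le]
    rintro _ ⟨i, rfl⟩
    obtain ⟨j | j, rfl⟩ := e.surjective i
    · have hj : x (e (.inl j)) = (-ε) • x (e (.inr j)) := by
        have hxj := congrFun hx j
        rw [sumFold_apply, Pi.zero_apply] at hxj
        rw [Algebra.smul_def, map_neg]
        linear_combination hxj
      rw [hj]
      exact Submodule.smul_mem _ _ (Submodule.subset_span ⟨j, rfl⟩)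
    · exact Submodule.subset_span ⟨j, rfl⟩
  have : FiniteDimensional F (Submodule.span F (Set.range (x ∘ e ∘ .inr))) :=
    FiniteDimensional.span_of_finite F (Set.finite_range _)
  exact (Submodule.finrank_mono hle).trans (finrank_range_le_card _)

theorem Submodule.IsSelfDual.exists_finrank_span_range_le [Fintype ι] {F : Type*} [Field F]
    [Algebra F L] (e : κ ⊕ κ ≃ ι) (h2 : (2 : L) ≠ 0) (hκ : Odd (Fintype.card κ))
    (hF : IsSquare (-1 : F)) {C : Submodule L (ι → L)} (hC : C.IsSelfDual) :
    ∃ c ∈ C, c ≠ 0 ∧ finrank F (Submodule.span F (Set.range c)) ≤ Fintype.card κ := by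
  classical
  obtain ⟨ε, hε⟩ := hF
  by_contra! hMRD
  have hinj (ε' : F) : LinearMap.ker (sumFold e (algebraMap F L ε') ∘ₗ C.subtype) = ⊥ := by
    refine LinearMap.ker_eq_bot'.mpr fun c hc => ?_
    by_contra hc0
    exact (hMRD c c.2 (by simpa using hc0)).not_ge
      (finrank_span_range_le_of_sumFold_eq_zero ε' hc)
  set η := algebraMap F L ε
  have hη : η * η = -1 := by rw [← map_mul, ← hε, map_neg, map_one]
  have hfin : finrank L C = Fintype.card κ := by
    have := hC.two_mul_finrank
    rw [← Fintype.card_congr e, Fintype.card_sum] at this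
    omega
  let w : Basis κ L C := (finBasisOfFinrankEq L C hfin).reindex (Fintype.equivFin κ).symm
  let P : Matrix κ κ L := of fun i => sumFold e η (w i)
  let Q : Matrix κ κ L := of fun i => sumFold e (-η) (w i)
  have hP : IsUnit P := by
    rw [← linearIndependent_rows_iff_isUnit]
    exact w.linearIndependent.map' (sumFold e η ∘ₗ C.subtype) (hinj ε)
  have hQ : IsUnit Q := by
    have hker := hinj (-ε)
    rw [map_neg] at hker
    rw [← linearIndependent_rows_iff_isUnit]
    exact w.linearIndependent.map' (sumFold e (-η) ∘ₗ C.subtype) hker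
  have hskew : (P * Qᵀ)ᵀ = -(P * Qᵀ) := by
    ext i j
    have hsum := sumFold_dotProduct_add (e := e) hη (w i : ι → L) (w j)
    rw [(hC _).1 (w i).2 _ (w j).2, mul_zero] at hsum
    exact eq_neg_of_add_eq_zero_right hsum
  have hdet : (P * Qᵀ).det ≠ 0 := by
    rw [det_mul, det_transpose]
    exact ((isUnit_iff_isUnit_det P).mp hP).mul ((isUnit_iff_isUnit_det Q).mp hQ) |>.ne_zero
  exact hdet (det_eq_zero_of_transpose_eq_neg h2 hκ hskew)

end SumFold

theorem stmt_11_general (F L : Type*) [Field F] [Field L] [Algebra F L]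
    (p : ℕ) [CharP F p] (hp : Odd p)
    (d : ℕ) (hd : Odd d) :
    ((∃ C : Submodule L (Fin (2 * d) → L),
        ∀ x, x ∈ C ↔ ∀ y ∈ C, ∑ i, x i * y i = 0) → IsSquare (-1 : L)) ∧
    (IsSquare (-1 : F) →
      ¬ ∃ C : Submodule L (Fin (2 * d) → L),
          (∀ x, x ∈ C ↔ ∀ y ∈ C, ∑ i, x i * y i = 0) ∧
          ∀ c ∈ C, c ≠ 0 →
            d + 1 ≤ Module.finrank F (Submodule.span F (Set.range c))) := by
  have : CharP L p := charP_of_injective_algebraMap (algebraMap F L).injective p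
  have h2 : (2 : L) ≠ 0 := Ring.two_ne_zero <| by
    rw [ringChar.eq L p]
    rintro rfl
    exact Nat.not_odd_iff_even.mpr even_two hp
  refine ⟨fun ⟨C, hC⟩ => ?_, fun hF ⟨C, hC, hMRD⟩ => ?_⟩
  · have hC : C.IsSelfDual := hC
    have hfin : finrank L C = d := by
      have := hC.two_mul_finrank
      rw [Fintype.card_fin] at this
      omega
    simpa [hfin, hd.neg_one_pow] using hC.isSquare_neg_one_pow_finrank
  · obtain ⟨c, hc, hc0, hle⟩ := Submodule.IsSelfDual.exists_finrank_span_range_le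
      (finSumFinEquiv.trans (finCongr (two_mul d).symm)) h2 (by simpa using hd) hF hC
    exact (hMRD c hc hc0).not_gt (by simpa using hle)

/-- For `n = 2d` with `d` odd and `F` of odd characteristic: existence of a self-dual
code in `Lⁿ` forces `-1` to be a square in `L`; and if `-1` is a square in `F`, there
is no self-dual MRD code in `Lⁿ`. -/
theorem stmt_11 (F L : Type*) [Field F] [Field L] [Algebra F L] [FiniteDimensional F L]
    (p : ℕ) [Fact p.Prime] [CharP F p] (hp : Odd p)
    (d : ℕ) (hd : Odd d) (hm : 2 * d ≤ Module.finrank F L) :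
    ((∃ C : Submodule L (Fin (2 * d) → L),
        ∀ x, x ∈ C ↔ ∀ y ∈ C, ∑ i, x i * y i = 0) → IsSquare (-1 : L)) ∧
    (IsSquare (-1 : F) →
      ¬ ∃ C : Submodule L (Fin (2 * d) → L),
          (∀ x, x ∈ C ↔ ∀ y ∈ C, ∑ i, x i * y i = 0) ∧
          ∀ c ∈ C, c ≠ 0 →
            d + 1 ≤ Module.finrank F (Submodule.span F (Set.range c))) :=
  stmt_11_general F L p hp d hd
end

section
/- Let L/F be a cyclic field extension of degree n with Galois group generated by σ, and let c₀ = (c₁,...,c_n) ∈ Lⁿ where c₁,...,c_n form an F-basis of L. Let C be the L-span of c₀, σ(c₀), ..., σ^{d−1}(c₀) for some d ≤ n, where σ acts coordinatewise. Then every nonzero element of C has rank weight at least n − d + 1; in particular, C is an MRD code of dimension d. -/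
/-!
The codeword `∑ₖ gₖ σᵏ(c₀)` is `P(σ) ∘ c₀` for the skew polynomial `P = ∑_{k<d} gₖ Xᵏ`, so its
rank weight is the rank of the `F`-linear operator `P(σ)` on `L`, and it suffices to show
`dim_F ker P(σ) < d` when `P(σ) ≠ 0`. If `y ≠ 0` lies in the kernel, right division by
`X - α` with `α = σ y / y` has zero remainder, so `P(σ) = Q(σ) ∘ (σ - α)` with `deg Q < deg P`,
and `ker (σ - α) = F y` because the fixed field of `σ` is `F`; induct on `d`.
Dimension `d` of the code is Dedekind's independence of the characters `σᵏ`, `k < ord σ`.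
-/

open Module

section SkewPolyOp

variable {F L : Type*} [Field F] [Field L] [Algebra F L]

/-- `P(σ)` for the skew polynomial `P = ∑_{k<d} aₖ Xᵏ`. -/
noncomputable def skewPolyOp (σ : L ≃ₐ[F] L) {d : ℕ} (a : Fin d → L) : L →ₗ[F] L :=
  ∑ k, a k • (σ ^ (k : ℕ)).toLinearMap

lemma skewPolyOp_apply (σ : L ≃ₐ[F] L) {d : ℕ} (a : Fin d → L) (x : L) :
    skewPolyOp σ a x = ∑ k, a k * (σ ^ (k : ℕ)) x := by
  simp [skewPolyOp, smul_eq_mul]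

lemma skewPolyOp_succ_apply (σ : L ≃ₐ[F] L) {d : ℕ} (a : Fin (d + 1) → L) (x : L) :
    skewPolyOp σ a x = a 0 * x + skewPolyOp σ (Fin.tail a) (σ x) := by
  simp [skewPolyOp_apply, Fin.sum_univ_succ, Fin.tail]

/-- Right division by `X - α`. -/
lemma exists_skewPolyOp_eq_comp_sub_add (σ : L ≃ₐ[F] L) {d : ℕ} (a : Fin (d + 1) → L)
    (α : L) : ∃ (q : Fin d → L) (r : L),
      ∀ x, skewPolyOp σ a x = skewPolyOp σ q (σ x - α * x) + r * x := by
  induction d generalizing α with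
  | zero => exact ⟨0, a 0, fun x => by simp [skewPolyOp_apply]⟩
  | succ d ih =>
    obtain ⟨q, r, hqr⟩ := ih (Fin.tail a) (σ α)
    refine ⟨Fin.cons r q, a 0 + r * α, fun x => ?_⟩
    rw [skewPolyOp_succ_apply, hqr, skewPolyOp_succ_apply (a := Fin.cons r q)]
    simp only [Fin.cons_zero, Fin.tail_cons, map_sub, map_mul]
    ring

lemma finrank_ker_comp_le {K V : Type*} [DivisionRing K] [AddCommGroup V] [Module K V]
    [FiniteDimensional K V] (f g : V →ₗ[K] V) :
    finrank K (LinearMap.ker (g ∘ₗ f)) ≤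
      finrank K (LinearMap.ker g) + finrank K (LinearMap.ker f) := by
  have h := LinearMap.lift_rank_comap_le (f := f) (LinearMap.ker g)
  simp only [Cardinal.lift_id, ← finrank_eq_rank] at h
  rw [LinearMap.ker_comp]
  exact_mod_cast h

lemma finrank_ker_sub_smul_le_one [FiniteDimensional F L] {σ : L ≃ₐ[F] L}
    (hfix : ∀ x, σ x = x → x ∈ Set.range (algebraMap F L)) {α y : L} (hy : y ≠ 0)
    (hσy : σ y = α * y) :
    finrank F (LinearMap.ker (σ.toLinearMap - α • LinearMap.id)) ≤ 1 := by
  have hα : α ≠ 0 := by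
    rintro rfl
    exact hy (σ.injective (by simpa using hσy))
  have hker : LinearMap.ker (σ.toLinearMap - α • LinearMap.id) ≤ F ∙ y := by
    intro x hx
    have hσx : σ x = α * x := sub_eq_zero.1 (by simpa using hx)
    obtain ⟨c, hc⟩ := hfix (x / y) (by rw [map_div₀, hσx, hσy, mul_div_mul_left _ _ hα])
    exact Submodule.mem_span_singleton.2 ⟨c, by rw [Algebra.smul_def, hc, div_mul_cancel₀ _ hy]⟩
  exact (Submodule.finrank_mono hker).trans (finrank_span_singleton hy).le

theorem finrank_ker_skewPolyOp_lt [FiniteDimensional F L] {σ : L ≃ₐ[F] L}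
    (hfix : ∀ x, σ x = x → x ∈ Set.range (algebraMap F L)) {d : ℕ} (a : Fin d → L)
    (ha : skewPolyOp σ a ≠ 0) : finrank F (LinearMap.ker (skewPolyOp σ a)) < d := by
  induction d with
  | zero => exact absurd (by simp [skewPolyOp]) ha
  | succ d ih =>
    by_cases hbot : LinearMap.ker (skewPolyOp σ a) = ⊥
    · rw [hbot, finrank_bot]; exact d.succ_pos
    obtain ⟨y, hy, hy0⟩ := (Submodule.ne_bot_iff _).1 hbot
    set α := σ y / y
    have hσy : σ y = α * y := (div_mul_cancel₀ _ hy0).symm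
    obtain ⟨q, r, hqr⟩ := exists_skewPolyOp_eq_comp_sub_add σ a α
    have hr : r = 0 := by
      have h := hqr y
      rw [LinearMap.mem_ker.1 hy, hσy, sub_self, map_zero, zero_add] at h
      exact (mul_eq_zero.1 h.symm).resolve_right hy0
    have hcomp : skewPolyOp σ a = skewPolyOp σ q ∘ₗ (σ.toLinearMap - α • LinearMap.id) := by
      ext x
      simp [hqr, hr]
    have hq : skewPolyOp σ q ≠ 0 := fun h => ha (by rw [hcomp, h, LinearMap.zero_comp])
    have hcomp_le := finrank_ker_comp_le (σ.toLinearMap - α • LinearMap.id) (skewPolyOp σ q)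
    have hlin := finrank_ker_sub_smul_le_one hfix hy0 hσy
    have hq_lt := ih q hq
    rw [hcomp]
    omega

lemma skewPolyOp_eq_zero_iff {σ : L ≃ₐ[F] L} {d : ℕ} (hd : d ≤ orderOf σ) (a : Fin d → L) :
    skewPolyOp σ a = 0 ↔ a = 0 := by
  refine ⟨fun h => ?_, fun h => by simp [skewPolyOp, h]⟩
  have hinj : Function.Injective fun k : Fin d => ((σ ^ (k : ℕ) : L ≃ₐ[F] L) : L →* L) := by
    intro k k' hkk'
    have hσk : (σ ^ (k : ℕ) : L ≃ₐ[F] L) = σ ^ (k' : ℕ) := AlgEquiv.ext fun x => DFunLike.congr_fun hkk' x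
    exact Fin.ext (pow_injOn_Iio_orderOf (by simp; omega) (by simp; omega) hσk)
  funext k
  refine Fintype.linearIndependent_iff.1 ((linearIndependent_monoidHom L L).comp _ hinj) a ?_ k
  funext x
  simpa [skewPolyOp_apply] using LinearMap.congr_fun h x

lemma sum_smul_pow_apply_basis (σ : L ≃ₐ[F] L) {n d : ℕ} (b : Basis (Fin n) F L)
    (g : Fin d → L) :
    ∑ k, g k • (fun j => (σ ^ (k : ℕ)) (b j)) = skewPolyOp σ g ∘ b := by
  funext j
  simp [skewPolyOp_apply]

end SkewPolyOp

lemma mem_range_algebraMap_of_apply_eq_self {F L : Type*} [Field F] [Field L] [Algebra F L]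
    [FiniteDimensional F L] {σ : L ≃ₐ[F] L} (hσ : orderOf σ = finrank F L)
    (hgen : ∀ τ : L ≃ₐ[F] L, τ ∈ Subgroup.zpowers σ) {x : L} (hx : σ x = x) :
    x ∈ Set.range (algebraMap F L) := by
  have : IsGalois F L := .of_card_aut_eq_finrank F L (by
    rw [← orderOf_eq_card_of_forall_mem_zpowers hgen, hσ])
  have hstab : Subgroup.zpowers σ ≤ MulAction.stabilizer (L ≃ₐ[F] L) x :=
    Subgroup.zpowers_le.2 hx
  exact (IsGalois.mem_range_algebraMap_iff_fixed x).2 fun τ => hstab (hgen τ)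

theorem stmt_13_general (F L : Type*) [Field F] [Field L] [Algebra F L] [FiniteDimensional F L]
    (n : ℕ) (hn : Module.finrank F L = n)
    (σ : L ≃ₐ[F] L) (hσ : orderOf σ = n)
    (hgen : ∀ τ : L ≃ₐ[F] L, τ ∈ Subgroup.zpowers σ)
    (b : Module.Basis (Fin n) F L) (d : ℕ) (hdn : d ≤ n) :
    Module.finrank L (Submodule.span L
        (Set.range fun k : Fin d => fun j => (σ ^ (k : ℕ)) (b j))) = d ∧
    ∀ c ∈ Submodule.span L (Set.range fun k : Fin d => fun j => (σ ^ (k : ℕ)) (b j)),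
      c ≠ 0 → n - d + 1 ≤ Module.finrank F (Submodule.span F (Set.range c)) := by
  have hindep : LinearIndependent L fun k : Fin d => fun j => (σ ^ (k : ℕ)) (b j) := by
    refine Fintype.linearIndependent_iff.2 fun g hg => ?_
    rw [sum_smul_pow_apply_basis] at hg
    have hP : skewPolyOp σ g = 0 := b.ext fun j => congr_fun hg j
    exact congr_fun ((skewPolyOp_eq_zero_iff (hσ ▸ hdn) g).1 hP)
  refine ⟨by rw [finrank_span_eq_card hindep, Fintype.card_fin], fun c hc hc0 => ?_⟩
  obtain ⟨g, rfl⟩ := (Submodule.mem_span_range_iff_exists_fun L).1 hc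
  rw [sum_smul_pow_apply_basis] at hc0 ⊢
  have hP : skewPolyOp σ g ≠ 0 := fun h => hc0 (by rw [h]; rfl)
  have hker := finrank_ker_skewPolyOp_lt
    (fun x => mem_range_algebraMap_of_apply_eq_self (hσ.trans hn.symm) hgen) g hP
  have hrank := (skewPolyOp σ g).finrank_range_add_finrank_ker
  rw [Set.range_comp, Submodule.span_image, b.span_eq, Submodule.map_top]
  omega

/-- Gabidulin codes are MRD: if `L/F` is cyclic of degree `n` generated by `σ` and the
coordinates of `c₀` form an `F`-basis `b` of `L`, then the `L`-span of
`c₀, σ(c₀), ..., σ^{d-1}(c₀)` has dimension `d` and every nonzero codeword has rank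
weight at least `n - d + 1`. -/
theorem stmt_13 (F L : Type*) [Field F] [Field L] [Algebra F L] [FiniteDimensional F L]
    (n : ℕ) (hn : Module.finrank F L = n)
    (σ : L ≃ₐ[F] L) (hσ : orderOf σ = n)
    (hgen : ∀ τ : L ≃ₐ[F] L, τ ∈ Subgroup.zpowers σ)
    (b : Module.Basis (Fin n) F L) (d : ℕ) (hd : 0 < d) (hdn : d ≤ n) :
    Module.finrank L (Submodule.span L
        (Set.range fun k : Fin d => fun j => (σ ^ (k : ℕ)) (b j))) = d ∧
    ∀ c ∈ Submodule.span L (Set.range fun k : Fin d => fun j => (σ ^ (k : ℕ)) (b j)),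
      c ≠ 0 → n - d + 1 ≤ Module.finrank F (Submodule.span F (Set.range c)) :=
  stmt_13_general F L n hn σ hσ hgen b d hdn
end

section
/- Let L/F be a field extension of degree m, s : L → F a nonzero F-linear map, α an F-basis of L with dual basis α′ with respect to b_s(x,y) = s(xy). Let B ∈ M_n(F) be an invertible symmetric matrix, and define φ_B(c,c′) = c B (c′)ᵗ on Lⁿ and ψ_B(M,N) = tr(M B Nᵗ) on M_{m×n}(F). Then for all c, c′ ∈ Lⁿ, s(φ_B(c,c′)) = ψ_B(M_α(c), M_{α′}(c′)), and for every L-subspace C ⊆ Lⁿ, M_{α′}(C^{⊥_{φ_B}}) = (M_α(C))^{⊥_{ψ_B}}. -/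
/-!
Writing `x = ∑ xₖ αₖ` and `y = ∑ y'ₖ α'ₖ`, duality gives `s (x * y) = ∑ₖ xₖ y'ₖ`, and expanding
`φ_B` bilinearly turns `s ∘ φ_B` into the trace form `ψ_B` of the coordinate matrices.

For the orthogonals: since `C` is an `L`-subspace and `s ≠ 0`, the `L`-linear form `φ_B(x, ·)`
vanishes on `C` iff `s ∘ φ_B(x, ·)` does (if `φ_B(x, y) ≠ 0`, rescale `y` so that `φ_B(x, y)` hits
a point where `s` is nonzero). By the first identity, with `α` and `α'` exchanged, this says that
`M_{α'}(x)` is `ψ_B`-orthogonal to `M_α(C)`; and `M_{α'}` is a bijection `Lⁿ → M_{m×n}(F)`.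
-/

open Matrix

namespace Module.Basis

variable {R A ι : Type*} [CommSemiring R] [CommSemiring A] [Algebra R A] [Fintype ι]
  [DecidableEq ι]

theorem map_mul_eq_sum_repr_mul_repr (s : A →ₗ[R] R) (b b' : Basis ι R A)
    (hdual : ∀ i j, s (b i * b' j) = if i = j then 1 else 0) (x y : A) :
    s (x * y) = ∑ k, b.repr x k * b'.repr y k := by
  conv_lhs => rw [← b.sum_repr x, ← b'.sum_repr y]
  simp only [Finset.sum_mul_sum, smul_mul_smul_comm, map_sum, map_smul, hdual, smul_eq_mul,
    mul_ite, mul_one, mul_zero, Finset.sum_ite_eq, Finset.mem_univ, if_true]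

theorem map_sum_sum_mul_algebraMap_mul_eq_trace {κ : Type*} [Fintype κ] (s : A →ₗ[R] R)
    (b b' : Basis ι R A) (hdual : ∀ i j, s (b i * b' j) = if i = j then 1 else 0)
    (B : Matrix κ κ R) (c c' : κ → A) :
    s (∑ i, ∑ j, c i * algebraMap R A (B i j) * c' j) =
      trace (b.toMatrix c * B * (b'.toMatrix c')ᵀ) := by
  have hterm : ∀ i j, c i * algebraMap R A (B i j) * c' j = B i j • (c i * c' j) := by
    intro i j
    rw [Algebra.smul_def]
    ring
  simp only [hterm, map_sum, map_smul, map_mul_eq_sum_repr_mul_repr s b b' hdual, smul_eq_mul,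
    Finset.mul_sum, Matrix.trace, diag_apply, Matrix.mul_apply, transpose_apply, toMatrix_apply,
    Finset.sum_mul]
  conv_rhs => rw [Finset.sum_comm]
  rw [Finset.sum_comm]
  refine Finset.sum_congr rfl fun j _ => ?_
  rw [Finset.sum_comm]
  exact Finset.sum_congr rfl fun k _ => Finset.sum_congr rfl fun i _ => by ring

end Module.Basis

theorem Module.Basis.toMatrix_surjective {R M ι ι' : Type*} [CommSemiring R] [AddCommMonoid M]
    [Module R M] [Finite ι] (e : Basis ι R M) :
    Function.Surjective (e.toMatrix : (ι' → M) → Matrix ι ι' R) :=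
  fun N => ⟨fun j => e.equivFun.symm (N · j), by
    ext i j
    exact congrFun (e.equivFun.apply_symm_apply (N · j)) i⟩

theorem Matrix.toLinearMap₂'_map_algebraMap_apply {R A κ : Type*} [CommSemiring R]
    [CommSemiring A] [Algebra R A] [Fintype κ] [DecidableEq κ] (B : Matrix κ κ R) (x y : κ → A) :
    toLinearMap₂' A (B.map (algebraMap R A)) x y =
      ∑ i, ∑ j, x i * algebraMap R A (B i j) * y j := by
  simp [toLinearMap₂'_apply', dotProduct, mulVec, Finset.mul_sum, mul_assoc]

theorem Submodule.forall_map_eq_zero_iff_forall_comp {F L M : Type*} [CommSemiring F] [Field L]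
    [Algebra F L] [AddCommGroup M] [Module L M] {s : L →ₗ[F] F} (hs : s ≠ 0) (f : M →ₗ[L] L)
    (C : Submodule L M) :
    (∀ y ∈ C, f y = 0) ↔ ∀ y ∈ C, s (f y) = 0 := by
  refine ⟨fun h y hy => by rw [h y hy, map_zero], fun h y hy => ?_⟩
  by_contra hfy
  obtain ⟨w, hw⟩ : ∃ w, s w ≠ 0 := by
    by_contra! H
    exact hs (LinearMap.ext H)
  apply hw
  simpa [hfy] using h ((w * (f y)⁻¹) • y) (C.smul_mem _ hy)

theorem stmt_16_general (F L : Type*) [Field F] [Field L] [Algebra F L]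
    (m n : ℕ)
    (s : L →ₗ[F] F) (hs : s ≠ 0)
    (b b' : Module.Basis (Fin m) F L)
    (hdual : ∀ i j, s (b i * b' j) = if i = j then 1 else 0)
    (B : Matrix (Fin n) (Fin n) F) :
    (∀ c c' : Fin n → L,
      s (∑ i, ∑ j, c i * algebraMap F L (B i j) * c' j)
        = Matrix.trace ((Matrix.of fun i j => b.repr (c j) i) * B *
            (Matrix.of fun i j => b'.repr (c' j) i)ᵀ)) ∧
    ∀ C : Submodule L (Fin n → L),
      (fun x : Fin n → L => Matrix.of fun i j => b'.repr (x j) i) ''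
          {x | ∀ y ∈ C, ∑ i, ∑ j, x i * algebraMap F L (B i j) * y j = 0}
        = {N : Matrix (Fin m) (Fin n) F | ∀ y ∈ C,
            Matrix.trace (N * B * (Matrix.of fun i j => b.repr (y j) i)ᵀ) = 0} := by
  have hdual' : ∀ i j, s (b' i * b j) = if i = j then 1 else 0 := fun i j => by
    rw [mul_comm, hdual]
    exact if_congr eq_comm rfl rfl
  refine ⟨b.map_sum_sum_mul_algebraMap_mul_eq_trace s b' hdual B, fun C => ?_⟩
  have hperp : {x : Fin n → L | ∀ y ∈ C, ∑ i, ∑ j, x i * algebraMap F L (B i j) * y j = 0} =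
      b'.toMatrix ⁻¹' {N | ∀ y ∈ C, trace (N * B * (b.toMatrix y)ᵀ) = 0} := by
    ext x
    simp only [Set.mem_ofPred_eq, Set.mem_preimage, ← toLinearMap₂'_map_algebraMap_apply]
    rw [C.forall_map_eq_zero_iff_forall_comp hs]
    simp only [toLinearMap₂'_map_algebraMap_apply,
      b'.map_sum_sum_mul_algebraMap_mul_eq_trace s b hdual']
  rw [hperp]
  exact Set.image_preimage_eq _ b'.toMatrix_surjective

/-- Duality transfer: with dual bases `b, b'` with respect to `bₛ(x,y) = s(xy)` and an
invertible symmetric `B ∈ M_n(F)`, one has `s(φ_B(c,c')) = ψ_B(M_b(c), M_{b'}(c'))`,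
and `M_{b'}(C^{⊥_{φ_B}}) = (M_b(C))^{⊥_{ψ_B}}` for every subspace `C ⊆ Lⁿ`. -/
theorem stmt_16 (F L : Type*) [Field F] [Field L] [Algebra F L] [FiniteDimensional F L]
    (m n : ℕ) (hm : Module.finrank F L = m)
    (s : L →ₗ[F] F) (hs : s ≠ 0)
    (b b' : Module.Basis (Fin m) F L)
    (hdual : ∀ i j, s (b i * b' j) = if i = j then 1 else 0)
    (B : Matrix (Fin n) (Fin n) F) (hBsymm : Bᵀ = B) (hB : IsUnit B) :
    (∀ c c' : Fin n → L,
      s (∑ i, ∑ j, c i * algebraMap F L (B i j) * c' j)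
        = Matrix.trace ((Matrix.of fun i j => b.repr (c j) i) * B *
            (Matrix.of fun i j => b'.repr (c' j) i)ᵀ)) ∧
    ∀ C : Submodule L (Fin n → L),
      (fun x : Fin n → L => Matrix.of fun i j => b'.repr (x j) i) ''
          {x | ∀ y ∈ C, ∑ i, ∑ j, x i * algebraMap F L (B i j) * y j = 0}
        = {N : Matrix (Fin m) (Fin n) F | ∀ y ∈ C,
            Matrix.trace (N * B * (Matrix.of fun i j => b.repr (y j) i)ᵀ) = 0} :=
  stmt_16_general F L m n s hs b b' hdual B
end

section
/- Let F = F_q with q odd and L/F a finite extension of degree m. Let δ ∈ F^× represent the determinant of the trace form T_{L/F}(x,y) = Tr_{L/F}(xy) in F^×/(F^×)², and choose λ ∈ L^× with N_{L/F}(λ) = δ (possible since the norm is surjective). Then the bilinear form T_{L/F,λ}(x,y) = Tr_{L/F}(λxy) on L has an orthonormal F-basis. -/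
/-!
Diagonalise `Tr(λxy)` in an orthogonal basis with entries `d₁, …, dₘ`. Their product is, up to a
nonzero square, the Gram determinant `N(λ) · det Tr(bᵢbⱼ) = δ · u²δ`, itself a square. Over `𝔽_q`
with `q` odd, `ax² + by² = 1` is solvable whenever `ab ≠ 0` (both sides take `(q + 1)/2` values),
so `⟨a, b⟩ ≅ ⟨1, ab⟩`. Merging diagonal entries pairwise turns `⟨d₁, …, dₘ⟩` into
`⟨1, …, 1, ∏ dᵢ⟩`, and the last entry, being a square, can be scaled to `1`.
-/

open Module Submodule

open Polynomial in
theorem exists_mul_sq_add_mul_sq_eq_one {F : Type*} [Field F] [Fintype F]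
    (hF : Odd (Fintype.card F)) {a b : F} (ha : a ≠ 0) (hb : b ≠ 0) :
    ∃ x y : F, a * x ^ 2 + b * y ^ 2 = 1 := by
  obtain ⟨x, y, h⟩ := FiniteField.exists_root_sum_quadratic
    (f := C a * X ^ 2 + C 0 * X + C (-1)) (g := C b * X ^ 2 + C 0 * X + C 0)
    (degree_quadratic ha) (degree_quadratic hb) (Nat.odd_iff.mp hF)
  simp only [map_zero, zero_mul, add_zero, map_neg, map_one, eval_add, eval_mul, eval_C, eval_pow,
    eval_X, eval_neg, eval_one] at h
  exact ⟨x, y, by linear_combination h⟩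

namespace LinearMap.BilinForm

variable {F V : Type*} [Field F] [AddCommGroup V] [Module F V] {B : LinearMap.BilinForm F V}

theorem apply_eq_zero_of_mem_span {s : Set V} {x y : V} (hx : x ∈ span F s)
    (h : ∀ z ∈ s, B z y = 0) : B x y = 0 :=
  (span_le (p := LinearMap.ker (B.flip y)).mpr h) hx

theorem iIsOrtho_cons (hB : B.IsSymm) {n : ℕ} {x : V} {v : Fin n → V} :
    B.iIsOrtho (Fin.cons x v : Fin (n + 1) → V) ↔ (∀ i, B x (v i) = 0) ∧ B.iIsOrtho v := by
  simp only [iIsOrtho_def, Fin.forall_fin_succ, Fin.cons_zero, Fin.cons_succ, ne_eq,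
    Fin.succ_inj, hB.eq (v _) x, forall_and, (Fin.succ_ne_zero _).symm, Fin.succ_ne_zero]
  tauto

variable {ι : Type*} [Fintype ι] [DecidableEq ι]

theorem det_toMatrix_eq_sq_mul (b c : Basis ι F V) :
    (toMatrix c B).det = (b.toMatrix c).det ^ 2 * (toMatrix b B).det := by
  rw [← toMatrix_mul_basis_toMatrix b c B, Matrix.det_mul, Matrix.det_mul, Matrix.det_transpose]
  ring

theorem det_toMatrix_of_iIsOrtho {v : Basis ι F V} (hv : B.iIsOrtho v) :
    (toMatrix v B).det = ∏ i, B (v i) (v i) := by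
  rw [← Matrix.det_diagonal]
  congr 1
  ext i j
  rcases eq_or_ne i j with rfl | hij
  · simp [toMatrix_apply]
  · rw [toMatrix_apply, Matrix.diagonal_apply_ne _ hij, hv hij]

variable [Fintype F]

theorem exists_orthogonal_pair_one_mul (hF : Odd (Fintype.card F)) (hB : B.IsSymm) {x y : V}
    (hxy : B x y = 0) (hx : B x x ≠ 0) (hy : B y y ≠ 0) :
    ∃ e f, e ∈ span F {x, y} ∧ f ∈ span F {x, y} ∧
      B e e = 1 ∧ B e f = 0 ∧ B f f = B x x * B y y := by
  obtain ⟨s, t, hst⟩ := exists_mul_sq_add_mul_sq_eq_one hF hx hy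
  have hyx : B y x = 0 := hB.eq x y ▸ hxy
  refine ⟨s • x + t • y, (-(B y y * t)) • x + (B x x * s) • y,
    mem_span_pair.mpr ⟨_, _, rfl⟩, mem_span_pair.mpr ⟨_, _, rfl⟩, ?_, ?_, ?_⟩ <;>
  simp only [map_add, map_smul, LinearMap.add_apply, LinearMap.smul_apply, smul_eq_mul, hxy, hyx]
  · linear_combination hst
  · ring
  · linear_combination B x x * B y y * hst

theorem exists_iIsOrtho_cons_cons (hF : Odd (Fintype.card F)) (hB : B.IsSymm) {n : ℕ}
    {x y : V} {u : Fin n → V} (hv : B.iIsOrtho (Fin.cons x (Fin.cons y u) : Fin (n + 2) → V))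
    (hx : B x x ≠ 0) (hy : B y y ≠ 0) :
    ∃ e f, B.iIsOrtho (Fin.cons e (Fin.cons f u) : Fin (n + 2) → V) ∧
      B e e = 1 ∧ B f f = B x x * B y y ∧
      span F (Set.range (Fin.cons e (Fin.cons f u) : Fin (n + 2) → V)) ≤
        span F (Set.range (Fin.cons x (Fin.cons y u) : Fin (n + 2) → V)) := by
  rw [iIsOrtho_cons hB, iIsOrtho_cons hB, Fin.forall_fin_succ] at hv
  obtain ⟨⟨hxy, hxu⟩, hyu, hu⟩ := hv
  simp only [Fin.cons_zero, Fin.cons_succ] at hxy hxu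
  obtain ⟨e, f, he, hf, hee, hef, hff⟩ := exists_orthogonal_pair_one_mul hF hB hxy hx hy
  have hperp : ∀ z ∈ span F {x, y}, ∀ i, B z (u i) = 0 := fun z hz i =>
    apply_eq_zero_of_mem_span hz (by simp [hxu i, hyu i])
  have hxyS : span F {x, y} ≤ span F (Set.range (Fin.cons x (Fin.cons y u) : Fin (n + 2) → V)) :=
    span_mono (by simp [Fin.range_cons, Set.insert_subset_iff])
  refine ⟨e, f, ?_, hee, hff, ?_⟩
  · rw [iIsOrtho_cons hB, iIsOrtho_cons hB, Fin.forall_fin_succ]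
    simpa using ⟨⟨hef, hperp e he⟩, hperp f hf, hu⟩
  · rw [span_le, Fin.range_cons, Fin.range_cons, Set.insert_subset_iff, Set.insert_subset_iff]
    exact ⟨hxyS he, hxyS hf, by rintro _ ⟨j, rfl⟩; exact subset_span ⟨j.succ.succ, rfl⟩⟩

theorem exists_orthonormal_of_iIsOrtho (hF : Odd (Fintype.card F)) (hB : B.IsSymm) {n : ℕ}
    {v : Fin n → V} (hv : B.iIsOrtho v) (hsq : IsSquare (∏ i, B (v i) (v i)))
    (hne : ∏ i, B (v i) (v i) ≠ 0) :
    ∃ w : Fin n → V, B.iIsOrtho w ∧ (∀ i, B (w i) (w i) = 1) ∧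
      ∀ i, w i ∈ span F (Set.range v) := by
  induction n with
  | zero => exact ⟨v, hv, fun i => i.elim0, fun i => i.elim0⟩
  | succ n ih =>
    rcases n with _ | n
    · obtain ⟨c, hc⟩ := hsq
      have hc0 : c ≠ 0 := by rintro rfl; simp_all
      refine ⟨fun _ => c⁻¹ • v 0, fun i j hij => absurd (Subsingleton.elim (α := Fin 1) i j) hij,
        fun _ => ?_, fun _ => smul_mem _ _ (subset_span ⟨0, rfl⟩)⟩
      simp only [Fin.prod_univ_succ, Fin.prod_univ_zero, mul_one] at hc
      simp only [map_smul, LinearMap.smul_apply, smul_eq_mul, hc]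
      field_simp
    induction v using Fin.consCases with | cons x v
    induction v using Fin.consCases with | cons y u
    simp only [Fin.prod_univ_succ, Fin.cons_zero, Fin.cons_succ] at hsq hne
    obtain ⟨e, f, hefu, hee, hff, hspan⟩ := exists_iIsOrtho_cons_cons hF hB hv
      (left_ne_zero_of_mul hne) (left_ne_zero_of_mul (right_ne_zero_of_mul hne))
    obtain ⟨he, hfu⟩ := (iIsOrtho_cons hB).mp hefu
    have hprod : ∏ i, B ((Fin.cons f u : Fin (n + 1) → V) i) ((Fin.cons f u : Fin (n + 1) → V) i) =
        B x x * (B y y * ∏ i, B (u i) (u i)) := by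
      simp only [Fin.prod_univ_succ, Fin.cons_zero, Fin.cons_succ, hff, mul_assoc]
    obtain ⟨w, hwo, hw1, hwmem⟩ := ih hfu (hprod ▸ hsq) (hprod ▸ hne)
    refine ⟨Fin.cons e w, (iIsOrtho_cons hB).mpr ⟨fun i => ?_, hwo⟩,
      Fin.forall_fin_succ.mpr ⟨by simpa using hee, by simpa using hw1⟩,
      Fin.forall_fin_succ.mpr ⟨by simpa using hspan (subset_span ⟨0, rfl⟩), fun i => ?_⟩⟩
    · rw [hB.eq]
      refine apply_eq_zero_of_mem_span (hwmem i) ?_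
      rintro _ ⟨j, rfl⟩
      rw [hB.eq, he j]
    · refine hspan (span_mono ?_ (hwmem i))
      rintro _ ⟨j, rfl⟩
      exact ⟨j.succ, rfl⟩

theorem exists_orthonormal_basis_of_isSquare_det (hF : Odd (Fintype.card F)) (hB : B.IsSymm)
    (b : Basis ι F V) (hsq : IsSquare (toMatrix b B).det) (hne : (toMatrix b B).det ≠ 0) :
    ∃ α : Basis ι F V, ∀ i j, B (α i) (α j) = if i = j then 1 else 0 := by
  have : FiniteDimensional F V := Module.Finite.of_basis b
  have : Invertible (2 : F) := invertibleOfNonzero <| Ring.two_ne_zero fun h => by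
    have := FiniteField.even_card_iff_char_two.mp h
    exact Nat.not_even_iff_odd.mpr hF (Nat.even_iff.mpr this)
  obtain ⟨v₀, hv₀⟩ := exists_orthogonal_basis (isSymm_iff.mp hB)
  set e := b.indexEquiv v₀
  have hv : B.iIsOrtho (v₀.reindex e.symm) := iIsOrtho_def.mpr fun i j hij => by
    simpa using iIsOrtho_def.mp hv₀ _ _ (e.injective.ne hij)
  have hdet := det_toMatrix_eq_sq_mul (B := B) b (v₀.reindex e.symm)
  rw [det_toMatrix_of_iIsOrtho hv] at hdet
  simp only [Basis.reindex_apply, Equiv.symm_symm, e.prod_comp (fun k => B (v₀ k) (v₀ k))]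
    at hdet
  have hunit := (b.isUnit_det (v₀.reindex e.symm)).ne_zero
  rw [Basis.det_apply] at hunit
  obtain ⟨w, hwo, hw1, -⟩ := exists_orthonormal_of_iIsOrtho hF hB hv₀
    (hdet ▸ (IsSquare.sq _).mul hsq) (hdet ▸ mul_ne_zero (pow_ne_zero 2 hunit) hne)
  have hli := linearIndependent_of_iIsOrtho hwo (fun i => by simp [hw1])
  refine ⟨(basisOfLinearIndependentOfCardEqFinrank' w hli (Fintype.card_fin _)).reindex e.symm,
    fun i j => ?_⟩
  simp only [Basis.reindex_apply, Equiv.symm_symm, coe_basisOfLinearIndependentOfCardEqFinrank']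
  split_ifs with hij
  · rw [hij, hw1]
  · exact hwo (e.injective.ne hij)

end LinearMap.BilinForm

namespace Algebra

variable (F : Type*) {L : Type*} [Field F] [Field L] [Algebra F L]

noncomputable def scaledTraceForm (lam : L) : LinearMap.BilinForm F L :=
  (traceForm F L).compLeft (lmul F L lam)

variable {F}

@[simp]
theorem scaledTraceForm_apply (lam x y : L) :
    scaledTraceForm F lam x y = trace F L (lam * x * y) :=
  rfl

theorem scaledTraceForm_isSymm (lam : L) : (scaledTraceForm F lam).IsSymm :=
  ⟨fun x y => by simp only [scaledTraceForm_apply, mul_right_comm]⟩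

theorem det_toMatrix_scaledTraceForm {ι : Type*} [Fintype ι] [DecidableEq ι] (b : Basis ι F L)
    (lam : L) : (LinearMap.BilinForm.toMatrix b (scaledTraceForm F lam)).det =
      norm F lam * (LinearMap.BilinForm.toMatrix b (traceForm F L)).det := by
  rw [scaledTraceForm, LinearMap.BilinForm.toMatrix_compLeft, Matrix.det_mul, Matrix.det_transpose,
    ← leftMulMatrix_apply, ← norm_eq_matrix_det]

end Algebra

theorem stmt_17_general (F L : Type*) [Field F] [Fintype F] [Field L] [Algebra F L]
    (hq : Odd (Fintype.card F))
    (m : ℕ)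
    (b : Module.Basis (Fin m) F L) (δ : F) (hδ : δ ≠ 0)
    (hdet : ∃ u : F, u ≠ 0 ∧
      (Matrix.of fun i j => Algebra.trace F L (b i * b j)).det = u ^ 2 * δ)
    (lam : L) (hlam : Algebra.norm F lam = δ) :
    ∃ α : Module.Basis (Fin m) F L,
      ∀ i j, Algebra.trace F L (lam * α i * α j) = if i = j then 1 else 0 := by
  obtain ⟨u, hu, hdet⟩ := hdet
  have hgram : (LinearMap.BilinForm.toMatrix b (Algebra.scaledTraceForm F lam)).det =
      (u * δ) ^ 2 := by
    have htrace : LinearMap.BilinForm.toMatrix b (Algebra.traceForm F L) =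
        Matrix.of fun i j => Algebra.trace F L (b i * b j) :=
      Matrix.ext (Algebra.traceForm_toMatrix F b)
    rw [Algebra.det_toMatrix_scaledTraceForm, hlam, htrace, hdet]
    ring
  obtain ⟨α, hα⟩ := LinearMap.BilinForm.exists_orthonormal_basis_of_isSquare_det hq
    (Algebra.scaledTraceForm_isSymm lam) b (hgram ▸ IsSquare.sq _)
    (hgram ▸ pow_ne_zero 2 (mul_ne_zero hu hδ))
  exact ⟨α, by simpa using hα⟩

/-- Over a finite field `F` of odd cardinality, if `δ` represents the determinant of
the trace form of `L/F` modulo squares and `λ ∈ L^×` has norm `δ`, then the twisted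
trace form `(x,y) ↦ Tr_{L/F}(λ x y)` has an orthonormal basis. -/
theorem stmt_17 (F L : Type*) [Field F] [Fintype F] [Field L] [Algebra F L]
    [FiniteDimensional F L]
    (hq : Odd (Fintype.card F))
    (m : ℕ) (hm : Module.finrank F L = m)
    (b : Module.Basis (Fin m) F L) (δ : F) (hδ : δ ≠ 0)
    (hdet : ∃ u : F, u ≠ 0 ∧
      (Matrix.of fun i j => Algebra.trace F L (b i * b j)).det = u ^ 2 * δ)
    (lam : L) (hlam : Algebra.norm F lam = δ) :
    ∃ α : Module.Basis (Fin m) F L,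
      ∀ i j, Algebra.trace F L (lam * α i * α j) = if i = j then 1 else 0 :=
  stmt_17_general F L hq m b δ hδ hdet lam hlam
end

section
/- Let F be a field of characteristic two and L/F a finite separable field extension of degree m. Then the trace form T_{L/F}(x,y) = Tr_{L/F}(xy) admits an orthonormal F-basis α, and for such a basis, for any L-subspace C ⊆ Lⁿ, one has M_α(C^⊥) = (M_α(C))^⊥, where orthogonals are with respect to the standard inner product on Lⁿ and the form (M,N) ↦ tr(MNᵗ) on M_{m×n}(F) respectively. In particular C is self-dual iff M_α(C) is self-dual. -/
open Matrix

section Aux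

open LinearMap Module

private theorem trace_mul_self_char_two {F L : Type*} [Field F] [Field L] [Algebra F L]
    [CharP F 2] [FiniteDimensional F L] [Algebra.IsSeparable F L] (x : L) :
    Algebra.trace F L (x * x) = Algebra.trace F L x * Algebra.trace F L x := by
  have h : Function.Injective (algebraMap F (AlgebraicClosure F)) :=
    (algebraMap F (AlgebraicClosure F)).injective
  haveI : CharP (AlgebraicClosure F) 2 := charP_of_injective_algebraMap h 2
  apply h
  rw [RingHom.map_mul, trace_eq_sum_embeddings (AlgebraicClosure F) (x := x * x),
    trace_eq_sum_embeddings (AlgebraicClosure F) (x := x), CharTwo.sum_mul_self]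
  exact Finset.sum_congr rfl fun σ _ => _root_.map_mul σ x x

private theorem key_ortho {F : Type*} [Field F] [CharP F 2] (n : ℕ) :
    ∀ (V : Type*) [AddCommGroup V] [Module F V] [FiniteDimensional F V]
      (B : LinearMap.BilinForm F V) (ℓ : V →ₗ[F] F),
      Module.finrank F V = n → (∀ x y : V, B x y = B y x) → B.Nondegenerate →
      (∀ x, B x x = ℓ x * ℓ x) → (n ≠ 0 → ℓ ≠ 0) →
      ∃ b : Fin n → V, ∀ i j, B (b i) (b j) = if i = j then 1 else 0 := by
  induction n using Nat.strong_induction_on with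
  | _ n IH =>
  intro V _ _ _ B ℓ hdim hsymm hnd hQ hl
  have hrefl : B.IsRefl := fun x y h => by rw [hsymm]; exact h
  rcases Nat.eq_zero_or_pos n with rfl | hn
  · exact ⟨Fin.elim0, fun i => i.elim0⟩
  obtain ⟨k, rfl⟩ : ∃ k, n = k + 1 := ⟨n - 1, (Nat.succ_pred_eq_of_pos hn).symm⟩
  obtain ⟨v, hv⟩ : ∃ v, ℓ v ≠ 0 := by
    by_contra hcon
    push_neg at hcon
    exact hl (Nat.succ_ne_zero k) (LinearMap.ext fun x => hcon x)
  set e : V := (ℓ v)⁻¹ • v with he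
  have hle : ℓ e = 1 := by rw [he, _root_.map_smul, smul_eq_mul, inv_mul_cancel₀ hv]
  have hBee : B e e = 1 := by rw [hQ, hle, one_mul]
  have hene : e ≠ 0 := fun h => by rw [h, _root_.map_zero] at hle; exact one_ne_zero hle.symm
  have heno : ¬ B.IsOrtho e e := by
    rw [LinearMap.BilinForm.isOrtho_def, hBee]; exact one_ne_zero
  set W : Submodule F V := B.orthogonal (F ∙ e) with hW
  have hmemW : ∀ x ∈ W, B e x = 0 := fun x hx => hx e (Submodule.mem_span_singleton_self e)
  have hmemW' : ∀ x ∈ W, B x e = 0 := fun x hx => by rw [hsymm]; exact hmemW x hx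
  have hWnd : (B.restrict W).Nondegenerate :=
    B.restrict_nondegenerate_orthogonal_spanSingleton hnd hrefl heno
  have hWdim : Module.finrank F W = k := by
    rw [hW, LinearMap.BilinForm.finrank_orthogonal hnd, finrank_span_singleton hene, hdim]
    omega
  by_cases hcase : ∃ x ∈ W, ℓ x ≠ 0
  · -- recurse on W
    obtain ⟨x₀, hx₀W, hx₀⟩ := hcase
    obtain ⟨b', hb'⟩ := IH k (Nat.lt_succ_self k) W (B.restrict W) (ℓ.comp W.subtype) hWdim
      (fun x y => hsymm x y) hWnd (fun x => hQ x)
      (fun _ h0 => hx₀ (by simpa using LinearMap.congr_fun h0 ⟨x₀, hx₀W⟩))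
    refine ⟨Fin.cons e fun i => (b' i : V), fun i j => ?_⟩
    induction i using Fin.cases with
    | zero =>
      induction j using Fin.cases with
      | zero => simpa using hBee
      | succ j =>
        rw [Fin.cons_zero, Fin.cons_succ, if_neg (Ne.symm (Fin.succ_ne_zero j))]
        exact hmemW _ (b' j).2
    | succ i =>
      induction j using Fin.cases with
      | zero =>
        rw [Fin.cons_zero, Fin.cons_succ, if_neg (Fin.succ_ne_zero i)]
        exact hmemW' _ (b' i).2
      | succ j =>
        rw [Fin.cons_succ, Fin.cons_succ]
        have h3 := hb' i j
        simp only [LinearMap.BilinForm.restrict_apply, LinearMap.domRestrict_apply] at h3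
        rw [show ((B (b' i : V)) (b' j : V)) = _ from h3]
        simp [Fin.succ_inj]
  · push_neg at hcase
    rcases Nat.eq_zero_or_pos k with rfl | hk
    · refine ⟨fun _ => e, fun i j => ?_⟩
      have hij : i = j := Fin.ext (by omega)
      simp [hij, hBee]
    obtain ⟨k', rfl⟩ : ∃ k', k = k' + 1 := ⟨k - 1, (Nat.succ_pred_eq_of_pos hk).symm⟩
    haveI : Nontrivial W := by
      apply Module.nontrivial_of_finrank_pos (R := F)
      rw [hWdim]; omega
    obtain ⟨u, hu⟩ := exists_ne (0 : W)
    obtain ⟨w₀, hw₀⟩ : ∃ w₀ : W, B.restrict W u w₀ ≠ 0 := by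
      by_contra hcon
      push_neg at hcon
      exact hu (hWnd.1 u hcon)
    have hw₀' : B (u : V) (w₀ : V) ≠ 0 := by
      simpa [LinearMap.BilinForm.restrict_apply] using hw₀
    set w : V := (B (u : V) (w₀ : V))⁻¹ • (w₀ : V) with hwdef
    have hwW : w ∈ W := W.smul_mem _ w₀.2
    have hBuw : B (u : V) w = 1 := by
      rw [hwdef, _root_.map_smul, smul_eq_mul, inv_mul_cancel₀ hw₀']
    have hBwu : B w (u : V) = 1 := by rw [hsymm]; exact hBuw
    have hlu : ℓ (u : V) = 0 := hcase _ u.2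
    have hlw : ℓ w = 0 := hcase _ hwW
    have hBuu : B (u : V) (u : V) = 0 := by rw [hQ, hlu, zero_mul]
    have hBww : B w w = 0 := by rw [hQ, hlw, zero_mul]
    have hBeu : B e (u : V) = 0 := hmemW _ u.2
    have hBue : B (u : V) e = 0 := hmemW' _ u.2
    have hBew : B e w = 0 := hmemW _ hwW
    have hBwe : B w e = 0 := hmemW' _ hwW
    set g : V := e + (u : V) with hg
    set h : V := e + w with hh
    set f : V := e + (u : V) + w with hf
    have h2 : (1 : F) + 1 = 0 := CharTwo.add_self_eq_zero 1
    have hBgg : B g g = 1 := by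
      simp only [hg, _root_.map_add, LinearMap.add_apply, hBee, hBeu, hBue, hBuu]
      ring
    have hBgh : B g h = 0 := by
      simp only [hg, hh, _root_.map_add, LinearMap.add_apply, hBee, hBew, hBue, hBuw]
      linear_combination h2
    have hBhg : B h g = 0 := by rw [hsymm]; exact hBgh
    have hBhh : B h h = 1 := by
      simp only [hh, _root_.map_add, LinearMap.add_apply, hBee, hBew, hBwe, hBww]
      ring
    have hBgf : B g f = 0 := by
      simp only [hg, hf, _root_.map_add, LinearMap.add_apply, hBee, hBeu, hBew, hBue, hBuu, hBuw]
      linear_combination h2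
    have hBhf : B h f = 0 := by
      simp only [hh, hf, _root_.map_add, LinearMap.add_apply, hBee, hBeu, hBew, hBwe, hBwu, hBww]
      linear_combination h2
    set U : Submodule F V := Submodule.span F {g, h} with hU
    have hgU : g ∈ U := Submodule.subset_span (Set.mem_insert _ _)
    have hhU : h ∈ U := Submodule.subset_span (Set.mem_insert_of_mem _ rfl)
    have hUnd : (B.restrict U).Nondegenerate := by
      refine (LinearMap.IsRefl.nondegenerate_iff_separatingLeft (B := B.restrict U) (fun x y h => hrefl _ _ h)).mpr ?_
      rintro ⟨x, hx⟩ hzero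
      obtain ⟨a, b, rfl⟩ := Submodule.mem_span_pair.mp hx
      have h1 := hzero ⟨g, hgU⟩
      have hb1 := hzero ⟨h, hhU⟩
      rw [LinearMap.BilinForm.restrict_apply] at h1 hb1
      have ha : a = 0 := by
        simpa [_root_.map_add, _root_.map_smul, LinearMap.add_apply, LinearMap.smul_apply,
          hBgg, hBhg, smul_eq_mul] using h1
      have hbz : b = 0 := by
        simpa [_root_.map_add, _root_.map_smul, LinearMap.add_apply, LinearMap.smul_apply,
          hBgh, hBhh, smul_eq_mul] using hb1
      simp [ha, hbz]
    have hcompl : IsCompl U (B.orthogonal U) :=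
      B.isCompl_orthogonal_of_restrict_nondegenerate hrefl hUnd
    have hli : LinearIndependent F ![g, h] := by
      rw [LinearIndependent.pair_iff]
      intro s t hst
      constructor
      · have h1 : B (s • g + t • h) g = 0 := by rw [hst, _root_.map_zero, LinearMap.zero_apply]
        simpa [_root_.map_add, _root_.map_smul, LinearMap.add_apply, LinearMap.smul_apply,
          hBgg, hBhg, smul_eq_mul] using h1
      · have h1 : B (s • g + t • h) h = 0 := by rw [hst, _root_.map_zero, LinearMap.zero_apply]
        simpa [_root_.map_add, _root_.map_smul, LinearMap.add_apply, LinearMap.smul_apply,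
          hBgh, hBhh, smul_eq_mul] using h1
    have hUdim : Module.finrank F U = 2 := by
      have hr : Set.range ![g, h] = {g, h} := by
        rw [Matrix.range_cons, Matrix.range_cons_empty, Set.singleton_union]
      have := finrank_span_eq_card hli
      rw [hr] at this
      rw [hU, this]
      simp
    set V₁ : Submodule F V := B.orthogonal U with hV₁
    have hV₁dim : Module.finrank F V₁ = k' := by
      rw [hV₁, LinearMap.BilinForm.finrank_orthogonal hnd, hUdim, hdim]
      omega
    have hV₁nd : (B.restrict V₁).Nondegenerate := by
      apply B.nondegenerate_restrict_of_disjoint_orthogonal hrefl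
      rw [hV₁, LinearMap.BilinForm.orthogonal_orthogonal hnd hrefl]
      exact hcompl.disjoint.symm
    have hfV₁ : f ∈ V₁ := by
      intro z hz
      obtain ⟨a, b, rfl⟩ := Submodule.mem_span_pair.mp hz
      show B (a • g + b • h) f = 0
      simp [_root_.map_add, _root_.map_smul, LinearMap.add_apply, LinearMap.smul_apply, hBgf, hBhf]
    have hlf : ℓ f = 1 := by
      rw [hf, _root_.map_add, _root_.map_add, hle, hlu, hlw]; ring
    obtain ⟨b'', hb''⟩ := IH k' (by omega) V₁ (B.restrict V₁) (ℓ.comp V₁.subtype) hV₁dim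
      (fun x y => hsymm x y) hV₁nd (fun x => hQ x)
      (fun _ h0 => by
        have hcf := LinearMap.congr_fun h0 ⟨f, hfV₁⟩
        simp only [LinearMap.comp_apply, Submodule.coe_subtype, LinearMap.zero_apply] at hcf
        rw [hlf] at hcf
        exact one_ne_zero hcf)
    have horthV₁g : ∀ i, B g ((b'' i : V)) = 0 := fun i => (b'' i).2 g hgU
    have horthV₁h : ∀ i, B h ((b'' i : V)) = 0 := fun i => (b'' i).2 h hhU
    refine ⟨Fin.cons g (Fin.cons h fun i => ((b'' i : V))), fun i j => ?_⟩
    induction i using Fin.cases with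
    | zero =>
      induction j using Fin.cases with
      | zero => simpa using hBgg
      | succ j =>
        rw [Fin.cons_zero, Fin.cons_succ, if_neg (Ne.symm (Fin.succ_ne_zero j))]
        induction j using Fin.cases with
        | zero => rw [Fin.cons_zero]; exact hBgh
        | succ j => rw [Fin.cons_succ]; exact horthV₁g j
    | succ i =>
      induction j using Fin.cases with
      | zero =>
        rw [Fin.cons_zero, Fin.cons_succ, if_neg (Fin.succ_ne_zero i)]
        induction i using Fin.cases with
        | zero => rw [Fin.cons_zero]; exact hBhg
        | succ i => rw [Fin.cons_succ]; rw [hsymm]; exact horthV₁g i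
      | succ j =>
        rw [Fin.cons_succ, Fin.cons_succ]
        simp only [Fin.succ_inj]
        induction i using Fin.cases with
        | zero =>
          induction j using Fin.cases with
          | zero => simpa using hBhh
          | succ j =>
            rw [Fin.cons_zero, Fin.cons_succ, if_neg (Ne.symm (Fin.succ_ne_zero j))]
            exact horthV₁h j
        | succ i =>
          induction j using Fin.cases with
          | zero =>
            rw [Fin.cons_zero, Fin.cons_succ, if_neg (Fin.succ_ne_zero i)]
            rw [hsymm]; exact horthV₁h i
          | succ j =>
            rw [Fin.cons_succ, Fin.cons_succ]
            have h3 := hb'' i j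
            simp only [LinearMap.BilinForm.restrict_apply, LinearMap.domRestrict_apply] at h3
            rw [show ((B (b'' i : V)) (b'' j : V)) = _ from h3]
            simp [Fin.succ_inj]

end Aux

/-- In characteristic two, for a finite separable extension `L/F`, the trace form has an
orthonormal basis `α`, and for such a basis `M_α(C^⊥) = (M_α(C))^⊥` for every subspace
`C ⊆ Lⁿ`; in particular `C` is self-dual iff `M_α(C)` is self-dual. -/
theorem stmt_18 (F L : Type*) [Field F] [Field L] [Algebra F L] [CharP F 2]
    [FiniteDimensional F L] [Algebra.IsSeparable F L]
    (m : ℕ) (hm : Module.finrank F L = m) :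
    ∃ α : Module.Basis (Fin m) F L,
      (∀ i j, Algebra.trace F L (α i * α j) = if i = j then 1 else 0) ∧
      ∀ (n : ℕ) (C : Submodule L (Fin n → L)),
        ((fun x : Fin n → L => Matrix.of fun i j => α.repr (x j) i) ''
            {x | ∀ y ∈ C, ∑ i, x i * y i = 0}
          = {N : Matrix (Fin m) (Fin n) F | ∀ y ∈ C,
              Matrix.trace (N * (Matrix.of fun i j => α.repr (y j) i)ᵀ) = 0}) ∧
        ((∀ x, x ∈ C ↔ ∀ y ∈ C, ∑ i, x i * y i = 0) ↔
          (fun x : Fin n → L => Matrix.of fun i j => α.repr (x j) i) '' (C : Set _)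
            = {N : Matrix (Fin m) (Fin n) F |
                ∀ M ∈ (fun x : Fin n → L =>
                  Matrix.of fun i j => α.repr (x j) i) '' (C : Set _),
                Matrix.trace (M * Nᵀ) = 0}) := by
  classical
  have hm0 : 0 < m := hm ▸ Module.finrank_pos
  obtain ⟨b, hb⟩ := key_ortho (F := F) m L (Algebra.traceForm F L) (Algebra.trace F L) hm
    (fun x y => by simp [Algebra.traceForm_apply, mul_comm])
    (traceForm_nondegenerate (K := F) (L := L))
    (fun x => by rw [Algebra.traceForm_apply]; exact trace_mul_self_char_two x)
    (fun _ => Algebra.trace_ne_zero F L)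
  have hio : (Algebra.traceForm F L).iIsOrtho b :=
    LinearMap.BilinForm.iIsOrtho_def.mpr fun i j hij => by
      simpa [hij] using hb i j
  have hli : LinearIndependent F b :=
    LinearMap.BilinForm.linearIndependent_of_iIsOrtho hio
      (fun i => by simp [LinearMap.BilinForm.isOrtho_def, hb i i])
  haveI : Nonempty (Fin m) := ⟨⟨0, hm0⟩⟩
  let α : Module.Basis (Fin m) F L := basisOfLinearIndependentOfCardEqFinrank hli (by simp [hm])
  have hα : ⇑α = b := coe_basisOfLinearIndependentOfCardEqFinrank hli _
  have hON : ∀ i j, Algebra.trace F L (α i * α j) = if i = j then 1 else 0 := by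
    intro i j
    have := hb i j
    rw [Algebra.traceForm_apply] at this
    rw [hα]
    exact this
  -- key computation: trace of product via coordinates
  have hTB : ∀ a c : L, Algebra.trace F L (a * c) = ∑ i, α.repr a i * α.repr c i := by
    intro a c
    conv_lhs => rw [← α.sum_repr a, ← α.sum_repr c]
    rw [Finset.sum_mul_sum, _root_.map_sum]
    rw [Finset.sum_congr rfl (fun i _ => _root_.map_sum (Algebra.trace F L) _ _)]
    have : ∀ i j, Algebra.trace F L ((α.repr a i • α i) * (α.repr c j • α j))
        = α.repr a i * α.repr c j * (if i = j then 1 else 0) := by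
      intro i j
      rw [smul_mul_smul_comm, _root_.map_smul, smul_eq_mul, hON]
    rw [Finset.sum_congr rfl fun i _ => Finset.sum_congr rfl fun j _ => this i j]
    refine Finset.sum_congr rfl fun i _ => ?_
    rw [Finset.sum_eq_single i]
    · simp
    · intro j _ hji
      simp [Ne.symm hji]
    · intro hni
      exact absurd (Finset.mem_univ i) hni
  have hTrMat : ∀ (n : ℕ) (x y : Fin n → L),
      Matrix.trace ((Matrix.of fun i j => α.repr (x j) i) *
          (Matrix.of fun i j => α.repr (y j) i)ᵀ)
        = Algebra.trace F L (∑ j, x j * y j) := by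
    intro n x y
    rw [_root_.map_sum]
    rw [Matrix.trace]
    simp only [Matrix.diag_apply, Matrix.mul_apply, Matrix.transpose_apply, Matrix.of_apply]
    rw [Finset.sum_comm]
    exact Finset.sum_congr rfl fun j _ => (hTB (x j) (y j)).symm
  have hinj : ∀ (n : ℕ),
      Function.Injective (fun x : Fin n → L => Matrix.of fun i j => α.repr (x j) i) := by
    intro n x y hxy
    funext j
    apply α.repr.injective
    ext i
    exact congrFun (congrFun hxy i) j
  refine ⟨α, hON, fun n C => ?_⟩
  have h1 : (fun x : Fin n → L => Matrix.of fun i j => α.repr (x j) i) ''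
      {x | ∀ y ∈ C, ∑ i, x i * y i = 0}
      = {N : Matrix (Fin m) (Fin n) F | ∀ y ∈ C,
          Matrix.trace (N * (Matrix.of fun i j => α.repr (y j) i)ᵀ) = 0} := by
    ext N
    constructor
    · rintro ⟨x, hx, rfl⟩ y hy
      rw [hTrMat n x y, hx y hy, _root_.map_zero]
    · intro hN
      set x : Fin n → L := fun j => ∑ i, N i j • α i with hxdef
      have hφx : (Matrix.of fun i j => α.repr (x j) i) = N := by
        ext i j
        simp only [Matrix.of_apply, hxdef]
        rw [α.repr_sum_self]
      refine ⟨x, ?_, hφx⟩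
      intro y hy
      apply (traceForm_nondegenerate (K := F) (L := L)).1
      intro z
      have hzy : z • y ∈ C := C.smul_mem z hy
      have hz := hN (z • y) hzy
      rw [← hφx, hTrMat n x (z • y)] at hz
      have harg : (∑ i, x i * y i) * z = ∑ j, x j * (z • y) j := by
        rw [Finset.sum_mul]
        refine Finset.sum_congr rfl fun i _ => ?_
        simp only [Pi.smul_apply, smul_eq_mul]
        ring
      rw [Algebra.traceForm_apply, harg]
      exact hz
  refine ⟨h1, ?_⟩
  have hTT : {N : Matrix (Fin m) (Fin n) F |
        ∀ M ∈ (fun x : Fin n → L => Matrix.of fun i j => α.repr (x j) i) '' (C : Set _),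
        Matrix.trace (M * Nᵀ) = 0}
      = (fun x : Fin n → L => Matrix.of fun i j => α.repr (x j) i) ''
        {x | ∀ y ∈ C, ∑ i, x i * y i = 0} := by
    rw [h1]
    ext N
    simp only [Set.mem_setOf_eq]
    constructor
    · intro hN y hy
      have := hN (Matrix.of fun i j => α.repr (y j) i) ⟨y, hy, rfl⟩
      rwa [← Matrix.trace_transpose, Matrix.transpose_mul, Matrix.transpose_transpose] at this
    · rintro hN M ⟨y, hy, rfl⟩
      have := hN y hy
      rwa [← Matrix.trace_transpose, Matrix.transpose_mul, Matrix.transpose_transpose] at this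
  constructor
  · intro hC
    rw [hTT]
    have hCS : (C : Set (Fin n → L)) = {x | ∀ y ∈ C, ∑ i, x i * y i = 0} :=
      Set.ext fun x => hC x
    rw [hCS]
  · intro hEq x
    rw [hTT] at hEq
    exact Set.ext_iff.mp ((Set.image_eq_image (hinj n)).mp hEq) x
end
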